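/- Let H be uniformly distributed over F_q^{(n-k)×n}, s uniform over F_q^{n-k}, and e uniform over vectors of Hamming weight t in F_q^n (with t > 0). Then the expectation over H of the statistical distance between e·Hᵀ and s is at most (1/2)·√((q^{n-k} − 1)/(C(n,t)(q-1)^t)). -/

import Mathlib

/-!
For `d ≠ 0` the additive map `H ↦ H *ᵥ d` is surjective, so two distinct vectors `e ≠ e'`
collide under `H` for exactly a `1 / q^(n-k)` fraction of the matrices: multiplication by a
uniform matrix is a universal hash family. For any universal family and any nonempty source
`W`, two independent uniform draws from `W` collide with probability at most
`(1 / Q) (1 + (Q - 1) / |W|)`, where `Q` is the size of the target; hence the squared `L²`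
distance between the fiber distribution and the uniform one averages to at most
`(Q - 1) / (Q |W|)` (the leftover hash lemma). Cauchy–Schwarz over all pairs `(H, v)` turns
this into the stated `L¹` bound.
-/

open Finset

lemma sum_card_fiber_sq {X Y : Type*} [Fintype Y] [DecidableEq Y] (f : X → Y)
    (W : Finset X) :
    ∑ y, #{x ∈ W | f x = y} ^ 2 = #{p ∈ W ×ˢ W | f p.1 = f p.2} := by
  rw [card_eq_sum_card_fiberwise (f := fun p => f p.1) (t := univ) fun _ _ => mem_univ _]
  refine sum_congr rfl fun y _ => ?_
  rw [sq, ← card_product, ← filter_product, filter_filter]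
  congr 1
  exact filter_congr fun p _ => by constructor <;> rintro ⟨h1, h2⟩ <;> simp_all

lemma sum_sub_one_div_card_sq {Y : Type*} [Fintype Y] (f : Y → ℝ) (hf : ∑ y, f y = 1) :
    ∑ y, (f y - 1 / Fintype.card Y) ^ 2 = ∑ y, f y ^ 2 - 1 / Fintype.card Y := by
  have hcard : (Fintype.card Y : ℝ) * (1 / Fintype.card Y) ^ 2 = 1 / Fintype.card Y := by
    rcases eq_or_ne (Fintype.card Y : ℝ) 0 with h | h
    · simp [h]
    · field_simp
  simp only [sub_sq, sum_add_distrib, sum_sub_distrib, ← sum_mul, ← mul_sum, hf, sum_const,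
    card_univ, nsmul_eq_mul, hcard]
  ring

lemma sum_abs_le_sqrt_card_mul_sum_sq {ι : Type*} (s : Finset ι) (f : ι → ℝ) :
    ∑ i ∈ s, |f i| ≤ √(#s * ∑ i ∈ s, f i ^ 2) := by
  rw [Real.le_sqrt (sum_nonneg fun _ _ => abs_nonneg _) (by positivity)]
  simpa only [sq_abs] using sq_sum_le_card_mul_sum_sq (s := s) (f := fun i => |f i|)

lemma card_filter_support_eq {ι β : Type*} [Fintype ι] [DecidableEq ι] [Fintype β] [Zero β]
    [DecidableEq β] (s : Finset ι) :
    #{x : ι → β | ({i | x i ≠ 0} : Finset ι) = s} = (Fintype.card β - 1) ^ #s := by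
  have : ({x : ι → β | ({i | x i ≠ 0} : Finset ι) = s} : Finset _)
      = Fintype.piFinset fun i => if i ∈ s then {0}ᶜ else {0} := by
    ext x
    simp only [mem_filter, mem_univ, true_and, Fintype.mem_piFinset, Finset.ext_iff]
    refine forall_congr' fun i => ?_
    split_ifs with hi <;> simp [hi]
  simp only [this, Fintype.card_piFinset, apply_ite card, card_compl, card_singleton]
  rw [prod_ite_mem, univ_inter, prod_const]

lemma card_hammingNorm_eq {ι β : Type*} [Fintype ι] [DecidableEq ι] [Fintype β] [Zero β]
    [DecidableEq β] (t : ℕ) :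
    #{x : ι → β | hammingNorm x = t} = (Fintype.card ι).choose t * (Fintype.card β - 1) ^ t := by
  rw [card_eq_sum_card_fiberwise (f := fun x : ι → β => ({i | x i ≠ 0} : Finset ι))
    (t := powersetCard t univ) fun x hx => by simpa [hammingNorm] using hx]
  rw [sum_const_nat (m := (Fintype.card β - 1) ^ t), card_powersetCard, card_univ]
  intro s hs
  rw [mem_powersetCard] at hs
  rw [filter_filter, ← hs.2, ← card_filter_support_eq]
  congr 1
  exact filter_congr fun x _ => ⟨And.right, fun h => ⟨by rw [hammingNorm, h], h⟩⟩

section UniversalHash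

variable {K X Y : Type*} [Fintype K] [Fintype Y] [DecidableEq Y]

def IsUniversalHash (h : K → X → Y) : Prop :=
  ∀ x x', x ≠ x' → #{k | h k x = h k x'} * Fintype.card Y ≤ Fintype.card K

lemma IsUniversalHash.sum_card_collisions_le [Nonempty Y] {h : K → X → Y}
    (hh : IsUniversalHash h) (W : Finset X) :
    (∑ k, #{p ∈ W ×ˢ W | h k p.1 = h k p.2} : ℝ)
      ≤ #W * Fintype.card K + (#W ^ 2 - #W) * (Fintype.card K / Fintype.card Y) := by
  classical
  have hdouble : ∑ k, #{p ∈ W ×ˢ W | h k p.1 = h k p.2}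
      = ∑ p ∈ W ×ˢ W, #{k | h k p.1 = h k p.2} :=
    sum_card_bipartiteAbove_eq_sum_card_bipartiteBelow (fun k (p : X × X) => h k p.1 = h k p.2)
  have hdiag : ∀ p ∈ W.diag, (#{k | h k p.1 = h k p.2} : ℝ) = Fintype.card K := by
    intro p hp
    rw [(mem_diag.1 hp).2, filter_true_of_mem fun _ _ => rfl, card_univ]
  have hoff : ∀ p ∈ W.offDiag,
      (#{k | h k p.1 = h k p.2} : ℝ) ≤ Fintype.card K / Fintype.card Y := by
    intro p hp
    rw [le_div_iff₀ (by exact_mod_cast Fintype.card_pos)]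
    exact_mod_cast hh p.1 p.2 (mem_offDiag.1 hp).2.2
  have hoffcard : (#W.offDiag : ℝ) = #W ^ 2 - #W := by
    rw [offDiag_card, Nat.cast_sub (Nat.le_mul_self _), Nat.cast_mul, sq]
  calc (∑ k, #{p ∈ W ×ˢ W | h k p.1 = h k p.2} : ℝ)
      = ∑ p ∈ W.diag, (#{k | h k p.1 = h k p.2} : ℝ)
        + ∑ p ∈ W.offDiag, (#{k | h k p.1 = h k p.2} : ℝ) := by
        rw [← sum_union (disjoint_diag_offDiag W), diag_union_offDiag]
        exact_mod_cast hdouble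
    _ ≤ #W * Fintype.card K + (#W ^ 2 - #W) * (Fintype.card K / Fintype.card Y) := by
        rw [sum_congr rfl hdiag, sum_const, diag_card, nsmul_eq_mul, ← hoffcard]
        grw [sum_le_card_nsmul _ _ _ hoff, nsmul_eq_mul]

lemma IsUniversalHash.sum_sum_sq_sub_le [Nonempty Y] {h : K → X → Y} (hh : IsUniversalHash h)
    {W : Finset X} (hW : W.Nonempty) :
    ∑ k, ∑ y, ((#{x ∈ W | h k x = y} : ℝ) / #W - 1 / Fintype.card Y) ^ 2
      ≤ (Fintype.card K : ℝ) * (Fintype.card Y - 1) / (#W * Fintype.card Y) := by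
  have hN : (#W : ℝ) ≠ 0 := by exact_mod_cast hW.card_pos.ne'
  have hQ : (Fintype.card Y : ℝ) ≠ 0 := by exact_mod_cast Fintype.card_ne_zero
  have hvar : ∀ k, ∑ y, ((#{x ∈ W | h k x = y} : ℝ) / #W - 1 / Fintype.card Y) ^ 2
      = (#{p ∈ W ×ˢ W | h k p.1 = h k p.2} : ℝ) / #W ^ 2 - 1 / Fintype.card Y := by
    intro k
    have hmass : ∑ y, (#{x ∈ W | h k x = y} : ℝ) / #W = 1 := by
      rw [← sum_div, ← Nat.cast_sum, ← card_eq_sum_card_fiberwise fun _ _ => mem_univ _,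
        div_self hN]
    rw [sum_sub_one_div_card_sq _ hmass, ← sum_card_fiber_sq, Nat.cast_sum, sum_div]
    simp only [div_pow, Nat.cast_pow]
  rw [sum_congr rfl fun k _ => hvar k, sum_sub_distrib, ← sum_div, sum_const, card_univ,
    nsmul_eq_mul]
  calc _ ≤ ((#W : ℝ) * Fintype.card K + (#W ^ 2 - #W) * (Fintype.card K / Fintype.card Y))
          / #W ^ 2 - Fintype.card K * (1 / Fintype.card Y) := by
        gcongr
        exact hh.sum_card_collisions_le W
    _ = _ := by
        field_simp
        ring

theorem IsUniversalHash.expected_statDist_le [Nonempty Y] {h : K → X → Y}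
    (hh : IsUniversalHash h) {W : Finset X} (hW : W.Nonempty) :
    (∑ k, (1 / 2) * ∑ y, |(#{x ∈ W | h k x = y} : ℝ) / #W - 1 / Fintype.card Y|)
        / Fintype.card K
      ≤ (1 / 2) * √((Fintype.card Y - 1) / #W) := by
  set dev : K × Y → ℝ := fun p => (#{x ∈ W | h p.1 x = p.2} : ℝ) / #W - 1 / Fintype.card Y
  have hsum : ∑ k, ∑ y, |(#{x ∈ W | h k x = y} : ℝ) / #W - 1 / Fintype.card Y|
      ≤ Fintype.card K * √((Fintype.card Y - 1) / #W) := by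
    calc _ = ∑ p, |dev p| := (Fintype.sum_prod_type _).symm
      _ ≤ √(Fintype.card (K × Y) * ∑ p, dev p ^ 2) := sum_abs_le_sqrt_card_mul_sum_sq _ _
      _ ≤ √(Fintype.card K * Fintype.card Y
            * (Fintype.card K * (Fintype.card Y - 1) / (#W * Fintype.card Y))) := by
        rw [Fintype.card_prod, Nat.cast_mul, Fintype.sum_prod_type]
        gcongr
        exact hh.sum_sum_sq_sub_le hW
      _ = √((Fintype.card K : ℝ) ^ 2 * ((Fintype.card Y - 1) / #W)) := by
        congr 1
        field_simp
      _ = Fintype.card K * √((Fintype.card Y - 1) / #W) := by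
        rw [Real.sqrt_mul (sq_nonneg _), Real.sqrt_sq (Nat.cast_nonneg _)]
  rw [← mul_sum, mul_div_assoc]
  gcongr
  exact div_le_of_le_mul₀ (Nat.cast_nonneg _) (Real.sqrt_nonneg _) (by linarith)

end UniversalHash

lemma AddMonoidHom.card_fiber_zero_mul_card_of_surjective {G M : Type*} [AddGroup G] [Fintype G]
    [AddGroup M] [Fintype M] [DecidableEq M] (f : G →+ M) (hf : Function.Surjective f) :
    #{g | f g = 0} * Fintype.card M = Fintype.card G := by
  calc #{g | f g = 0} * Fintype.card M = ∑ y, #{g | f g = y} := by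
        rw [sum_const_nat fun y _ => card_fiber_eq_of_mem_range f (hf y) ⟨0, map_zero f⟩,
          card_univ, mul_comm]
    _ = Fintype.card G := (card_eq_sum_card_fiberwise fun _ _ => mem_univ (f _)).symm

section Matrix

open Matrix

variable {F m n : Type*} [Field F] [Fintype n] [DecidableEq n]

lemma Matrix.mulVec_left_surjective {d : n → F} (hd : d ≠ 0) :
    Function.Surjective fun H : Matrix m n F => H *ᵥ d := by
  obtain ⟨j, hj⟩ : ∃ j, d j ≠ 0 := Function.ne_iff.1 hd
  intro v
  refine ⟨vecMulVec v (Pi.single j (d j)⁻¹), ?_⟩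
  simp [vecMulVec_mulVec, hj]

lemma Matrix.isUniversalHash_mulVec [Fintype m] [Fintype F] [DecidableEq F] [DecidableEq m] :
    IsUniversalHash fun (H : Matrix m n F) (e : n → F) => H *ᵥ e := by
  intro e e' hne
  have hcoll : ∀ H : Matrix m n F, H *ᵥ e = H *ᵥ e' ↔ H *ᵥ (e - e') = 0 := by
    intro H
    rw [mulVec_sub, sub_eq_zero]
  rw [filter_congr fun H _ => hcoll H]
  exact ((mulVec.addMonoidHomLeft (e - e')).card_fiber_zero_mul_card_of_surjective
    (mulVec_left_surjective (sub_ne_zero.2 hne))).le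

end Matrix

theorem stmt_15_general (F : Type) [Field F] [Fintype F] [DecidableEq F] (n k t : ℕ)
    (htn : t ≤ n) :
    (∑ H : Matrix (Fin (n - k)) (Fin n) F, (1 / 2) * ∑ v : Fin (n - k) → F,
        |((univ.filter (fun e : Fin n → F =>
              hammingNorm e = t ∧ H.mulVec e = v)).card : ℝ)
            / ((n.choose t : ℝ) * ((Fintype.card F : ℝ) - 1) ^ t)
          - 1 / (Fintype.card F : ℝ) ^ (n - k)|)
      / (Fintype.card (Matrix (Fin (n - k)) (Fin n) F) : ℝ)
    ≤ (1 / 2) * Real.sqrt (((Fintype.card F : ℝ) ^ (n - k) - 1)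
        / ((n.choose t : ℝ) * ((Fintype.card F : ℝ) - 1) ^ t)) := by
  set W : Finset (Fin n → F) := {e | hammingNorm e = t}
  have hW : #W = n.choose t * (Fintype.card F - 1) ^ t := by
    rw [card_hammingNorm_eq, Fintype.card_fin]
  have hWne : W.Nonempty := by
    rw [← card_pos, hW]
    exact Nat.mul_pos (Nat.choose_pos htn) (pow_pos (Nat.sub_pos_of_lt Fintype.one_lt_card) t)
  have hWcast : (#W : ℝ) = n.choose t * ((Fintype.card F : ℝ) - 1) ^ t := by
    rw [hW, Nat.cast_mul, Nat.cast_pow, Nat.cast_sub Fintype.card_pos, Nat.cast_one]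
  have hY : (Fintype.card (Fin (n - k) → F) : ℝ) = (Fintype.card F : ℝ) ^ (n - k) := by
    rw [Fintype.card_fun, Fintype.card_fin, Nat.cast_pow]
  have hbound :=
    (Matrix.isUniversalHash_mulVec (F := F) (m := Fin (n - k))).expected_statDist_le hWne
  rw [hWcast, hY] at hbound
  simpa only [W, filter_filter] using hbound

/-- For `H` uniform over `F_q^{(n-k)×n}`, `e` uniform over weight-`t` vectors and `s`
uniform over `F_q^{n-k}`, the expected statistical distance between `e·Hᵀ` and `s` is at
most `(1/2)·√((q^{n-k}-1)/(C(n,t)(q-1)^t))`. -/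
theorem stmt_15 (F : Type) [Field F] [Fintype F] [DecidableEq F] (n k t : ℕ)
    (hkn : k ≤ n) (ht : 0 < t) (htn : t ≤ n) :
    (∑ H : Matrix (Fin (n - k)) (Fin n) F, (1 / 2) * ∑ v : Fin (n - k) → F,
        |((univ.filter (fun e : Fin n → F =>
              hammingNorm e = t ∧ H.mulVec e = v)).card : ℝ)
            / ((n.choose t : ℝ) * ((Fintype.card F : ℝ) - 1) ^ t)
          - 1 / (Fintype.card F : ℝ) ^ (n - k)|)
      / (Fintype.card (Matrix (Fin (n - k)) (Fin n) F) : ℝ)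
    ≤ (1 / 2) * Real.sqrt (((Fintype.card F : ℝ) ^ (n - k) - 1)
        / ((n.choose t : ℝ) * ((Fintype.card F : ℝ) - 1) ^ t)) :=
  stmt_15_general F n k t htn
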